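/- arXiv:1810.04658 — 6 statements merged into one kernel-verified Lean document; each statement's English description precedes it below -/
import Mathlib

section
/- The function D(r,t) = (a₃ + a₄t)^((2a₂/a₄) - 1) · G(r·(a₃ + a₄t)^(-a₂/a₄)) satisfies the first-order PDE a₂·r·∂D/∂r + (a₃ + a₄t)·∂D/∂t = (2a₂ - a₄)·D for every differentiable function G : ℝ → ℝ, at every point (r,t) where a₃ + a₄t > 0. -/
/-! With `u = a₃ + a₄ t` and `ξ = r u^(-a₂/a₄)`, the chain rule gives
`a₂ r ∂D/∂r + u ∂D/∂t = (a₂ + a₄ b) r u^(c+b) G'(ξ) + a₄ c u^c G(ξ)` for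
`D = u^c G(r u^b)`. The choice `b = -a₂/a₄` kills the `G'` term (the level sets of `ξ` are the
characteristics of the operator), and `c = 2a₂/a₄ - 1` turns the remaining factor `a₄ c` into
`2a₂ - a₄`. -/

open Real

section
variable {G : ℝ → ℝ}

theorem hasDerivAt_const_mul_comp_mul_const {A B x : ℝ} (hG : DifferentiableAt ℝ G (x * B)) :
    HasDerivAt (fun y => A * G (y * B)) (A * (deriv G (x * B) * B)) x :=
  (hG.hasDerivAt.comp x (hasDerivAt_mul_const B)).const_mul A

theorem hasDerivAt_rpow_const_mul_comp_const_mul_rpow {u : ℝ → ℝ} {u' t : ℝ} (b c r : ℝ)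
    (hu : HasDerivAt u u' t) (hpos : 0 < u t) (hG : DifferentiableAt ℝ G (r * u t ^ b)) :
    HasDerivAt (fun s => u s ^ c * G (r * u s ^ b))
      (u' * u t ^ (c - 1) * (c * G (r * u t ^ b) + b * (r * u t ^ b) * deriv G (r * u t ^ b)))
      t := by
  have hpow (p : ℝ) := hu.rpow_const (p := p) (Or.inl hpos.ne')
  refine ((hpow c).mul (hG.hasDerivAt.comp t ((hpow b).const_mul r))).congr_deriv ?_
  have hexp : u t ^ c * u t ^ (b - 1) = u t ^ (c - 1) * u t ^ b := by
    rw [← rpow_add hpos, ← rpow_add hpos]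
    ring_nf
  simp only [Function.comp_apply]
  linear_combination (u' * b * r * deriv G (r * u t ^ b)) * hexp

end

theorem stmt_0 (a₂ a₃ a₄ : ℝ) (ha₄ : a₄ ≠ 0) (G : ℝ → ℝ) (hG : Differentiable ℝ G)
    (D : ℝ → ℝ → ℝ)
    (hD : ∀ r t : ℝ, D r t =
      (a₃ + a₄ * t) ^ (2 * a₂ / a₄ - 1) * G (r * (a₃ + a₄ * t) ^ (-(a₂ / a₄)))) :
    ∀ r t : ℝ, 0 < a₃ + a₄ * t →
      a₂ * r * deriv (fun r' => D r' t) r + (a₃ + a₄ * t) * deriv (fun t' => D r t') t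
        = (2 * a₂ - a₄) * D r t := by
  intro r t hu
  have hDr := hasDerivAt_const_mul_comp_mul_const (A := (a₃ + a₄ * t) ^ (2 * a₂ / a₄ - 1))
    (hG (r * (a₃ + a₄ * t) ^ (-(a₂ / a₄))))
  have hDt := hasDerivAt_rpow_const_mul_comp_const_mul_rpow (-(a₂ / a₄)) (2 * a₂ / a₄ - 1) r
    ((hasDerivAt_const_mul a₄).const_add a₃) hu (hG _)
  simp only [← hD] at hDr hDt
  rw [hDr.deriv, hDt.deriv, hD]
  set u := a₃ + a₄ * t
  set c := 2 * a₂ / a₄ - 1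
  set ξ := r * u ^ (-(a₂ / a₄))
  have hu_c : u * u ^ (c - 1) = u ^ c := by rw [rpow_sub_one hu.ne', mul_div_cancel₀ _ hu.ne']
  have hc : a₄ * c = 2 * a₂ - a₄ := by rw [mul_sub, mul_div_cancel₀ _ ha₄, mul_one]
  have hb : a₄ * (a₂ / a₄) = a₂ := mul_div_cancel₀ _ ha₄
  linear_combination (a₄ * (c * G ξ - a₂ / a₄ * ξ * deriv G ξ)) * hu_c + (u ^ c * G ξ) * hc
    - (ξ * u ^ c * deriv G ξ) * hb
end

section
/- The function Γ(r,t) = (a₃ + a₄t)^(-1) · F((r + a₁/a₂)·(a₃ + a₄t)^(-a₂/a₄)) satisfies the PDE (a₁ + a₂r)·∂Γ/∂r + (a₃ + a₄t)·∂Γ/∂t + a₄·Γ = 0 for every differentiable F, at every point with a₃ + a₄t > 0. -/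
/-!
With `q = r + a₁/a₂` and `s = a₃ + a₄t`, the vector field `(a₁ + a₂r) ∂_r + s ∂_t` equals
`a₂ q ∂_r + s ∂_t`, which annihilates the first integral `u = q s^(-a₂/a₄)`; hence it kills
`F(u)`, while it sends the prefactor `s⁻¹` to `-a₄ s⁻¹`, which is cancelled by `a₄ Γ`.
-/

open Real

section Characteristics

variable {F : ℝ → ℝ} {a₃ a₄ b c : ℝ}

theorem hasDerivAt_comp_add_mul_const {s r : ℝ} (hF : DifferentiableAt ℝ F ((r + b) * s)) :
    HasDerivAt (fun r' => F ((r' + b) * s)) (deriv F ((r + b) * s) * s) r := by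
  have h := ((hasDerivAt_id' r).add_const b).mul_const s
  rw [one_mul] at h
  exact hF.hasDerivAt.comp r h

theorem hasDerivAt_affine {t : ℝ} : HasDerivAt (fun t' => a₃ + a₄ * t') a₄ t := by
  simpa using ((hasDerivAt_id' t).const_mul a₄).const_add a₃

theorem hasDerivAt_comp_mul_affine_rpow {q t : ℝ} (hs : 0 < a₃ + a₄ * t)
    (hF : DifferentiableAt ℝ F (q * (a₃ + a₄ * t) ^ (-c))) :
    HasDerivAt (fun t' => F (q * (a₃ + a₄ * t') ^ (-c)))
      (deriv F (q * (a₃ + a₄ * t) ^ (-c)) * (-c * a₄ * q * (a₃ + a₄ * t) ^ (-c) / (a₃ + a₄ * t)))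
      t := by
  have hpow := (hasDerivAt_affine.rpow_const (p := -c) (Or.inl hs.ne')).const_mul q
  rw [Real.rpow_sub_one hs.ne'] at hpow
  exact (hF.hasDerivAt.comp t hpow).congr_deriv (by ring)

end Characteristics

theorem stmt_2 (a₁ a₂ a₃ a₄ : ℝ) (ha₂ : a₂ ≠ 0) (ha₄ : a₄ ≠ 0)
    (F : ℝ → ℝ) (hF : Differentiable ℝ F)
    (Γ : ℝ → ℝ → ℝ)
    (hΓ : ∀ r t : ℝ, Γ r t =
      (a₃ + a₄ * t) ^ (-1 : ℝ) * F ((r + a₁ / a₂) * (a₃ + a₄ * t) ^ (-(a₂ / a₄)))) :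
    ∀ r t : ℝ, 0 < a₃ + a₄ * t →
      (a₁ + a₂ * r) * deriv (fun r' => Γ r' t) r
        + (a₃ + a₄ * t) * deriv (fun t' => Γ r t') t + a₄ * Γ r t = 0 := by
  intro r t hs
  simp only [rpow_neg_one] at hΓ
  simp only [hΓ]
  have hr := (hasDerivAt_comp_add_mul_const (r := r) (b := a₁ / a₂)
    (s := (a₃ + a₄ * t) ^ (-(a₂ / a₄))) (hF _)).const_mul (a₃ + a₄ * t)⁻¹
  have ht := (hasDerivAt_affine.fun_inv hs.ne').fun_mul
    (hasDerivAt_comp_mul_affine_rpow (q := r + a₁ / a₂) (c := a₂ / a₄) hs (hF _))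
  rw [hr.deriv, ht.deriv]
  generalize (r + a₁ / a₂) * (a₃ + a₄ * t) ^ (-(a₂ / a₄)) = u
  field_simp
  ring
end

section
/- The function D(r,t) = (a₃ + a₄t)^((2a₂/a₄) - 1) · G((r + a₁/a₂)·(a₃ + a₄t)^(-a₂/a₄)) satisfies the PDE (a₁ + a₂r)·∂D/∂r + (a₃ + a₄t)·∂D/∂t = (2a₂ - a₄)·D for every differentiable G, at every point with a₃ + a₄t > 0. -/
/-!
Put `u = r + a₁/a₂` and `s = a₃ + a₄ t`, so that `D = s ^ c * G (u * s ^ b)` with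
`b = -a₂/a₄` and `c = 2a₂/a₄ - 1`. Such a function is homogeneous of degree `c` under the scaling
`(u, s) ↦ (λ ^ (-b) u, λ s)`, which leaves the similarity variable `u * s ^ b` fixed, so it satisfies
the Euler identity `s ∂ₛ - b u ∂ᵤ = c`. Since `a₁ + a₂ r = a₂ u` and `∂ₜ = a₄ ∂ₛ`, the operator of the
PDE is `a₄ (s ∂ₛ - b u ∂ᵤ)`, and `a₄ c = 2a₂ - a₄`.
-/

open Real

noncomputable def selfSimilar (G : ℝ → ℝ) (b c u s : ℝ) : ℝ :=
  s ^ c * G (u * s ^ b)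

section

variable {G : ℝ → ℝ} {b c u s : ℝ}

theorem hasDerivAt_selfSimilar_fst (hG : DifferentiableAt ℝ G (u * s ^ b)) :
    HasDerivAt (fun u' => selfSimilar G b c u' s) (s ^ c * (deriv G (u * s ^ b) * s ^ b)) u := by
  have hlin : HasDerivAt (fun u' : ℝ => u' * s ^ b) (s ^ b) u := by
    simpa using (hasDerivAt_id u).mul_const (s ^ b)
  exact (hG.hasDerivAt.comp u hlin).const_mul (s ^ c)

theorem hasDerivAt_selfSimilar_snd (hs : s ≠ 0) (hG : DifferentiableAt ℝ G (u * s ^ b)) :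
    HasDerivAt (fun s' => selfSimilar G b c u s')
      (c * s ^ (c - 1) * G (u * s ^ b) + s ^ c * (deriv G (u * s ^ b) * (u * (b * s ^ (b - 1)))))
      s := by
  have hpow : HasDerivAt (fun s' : ℝ => u * s' ^ b) (u * (b * s ^ (b - 1))) s :=
    (hasDerivAt_rpow_const (Or.inl hs)).const_mul u
  exact (hasDerivAt_rpow_const (Or.inl hs)).mul (hG.hasDerivAt.comp s hpow)

theorem selfSimilar_euler (hs : s ≠ 0) (hG : DifferentiableAt ℝ G (u * s ^ b)) :
    s * deriv (fun s' => selfSimilar G b c u s') s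
      - b * u * deriv (fun u' => selfSimilar G b c u' s) u = c * selfSimilar G b c u s := by
  rw [(hasDerivAt_selfSimilar_snd hs hG).deriv, (hasDerivAt_selfSimilar_fst hG).deriv,
    selfSimilar, rpow_sub_one hs, rpow_sub_one hs]
  field_simp
  ring

end

theorem stmt_3 (a₁ a₂ a₃ a₄ : ℝ) (ha₂ : a₂ ≠ 0) (ha₄ : a₄ ≠ 0)
    (G : ℝ → ℝ) (hG : Differentiable ℝ G)
    (D : ℝ → ℝ → ℝ)
    (hD : ∀ r t : ℝ, D r t =
      (a₃ + a₄ * t) ^ (2 * a₂ / a₄ - 1) * G ((r + a₁ / a₂) * (a₃ + a₄ * t) ^ (-(a₂ / a₄)))) :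
    ∀ r t : ℝ, 0 < a₃ + a₄ * t →
      (a₁ + a₂ * r) * deriv (fun r' => D r' t) r
        + (a₃ + a₄ * t) * deriv (fun t' => D r t') t = (2 * a₂ - a₄) * D r t := by
  intro r t ht
  set b := -(a₂ / a₄)
  set c := 2 * a₂ / a₄ - 1
  set u := r + a₁ / a₂
  set s := a₃ + a₄ * t
  have hDF : D = fun r t => selfSimilar G b c (r + a₁ / a₂) (a₃ + a₄ * t) := funext₂ hD
  have hs : s ≠ 0 := ht.ne'
  have hderiv_s := hasDerivAt_selfSimilar_snd (c := c) hs (hG (u * s ^ b))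
  have hderiv_r : deriv (fun r' => D r' t) r = deriv (fun u' => selfSimilar G b c u' s) u := by
    rw [hDF]
    exact deriv_comp_add_const (fun u' => selfSimilar G b c u' s) (a₁ / a₂) r
  have hderiv_t : deriv (fun t' => D r t') t = a₄ * deriv (fun s' => selfSimilar G b c u s') s := by
    have haff : HasDerivAt (fun t' : ℝ => a₃ + a₄ * t') a₄ t := by
      simpa using ((hasDerivAt_id t).const_mul a₄).const_add a₃
    rw [hDF, hderiv_s.deriv, mul_comm]
    exact (hderiv_s.comp t haff).deriv
  have hlin : a₁ + a₂ * r = -(b * a₄) * u := by simp only [b, u]; field_simp; ring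
  have hc : 2 * a₂ - a₄ = c * a₄ := by simp only [c]; field_simp
  rw [hderiv_r, hderiv_t, hlin, hc, hDF]
  linear_combination a₄ * selfSimilar_euler (c := c) hs (hG (u * s ^ b))
end

section
/- If D : ℝ × ℝ → ℝ is twice continuously differentiable and satisfies (a₁ + a₂r)·∂D/∂r + (a₃ + a₄t)·∂D/∂t = (2a₂ - a₄)·D everywhere, then its r-derivative D_r = ∂D/∂r satisfies (a₁ + a₂r)·∂D_r/∂r + (a₃ + a₄t)·∂D_r/∂t = (a₂ - a₄)·D_r everywhere. That is, the determining equation for D_r is automatically implied by the determining equation for D. -/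
/-!
Write `L = (a₁ + a₂ x) ∂ₓ + (a₃ + a₄ y) ∂_y`. Since the coefficient of `∂_y` does not depend on `x`
and mixed partials of a `C²` function commute, `[∂ₓ, L] = a₂ ∂ₓ`, i.e.
`∂ₓ (L D) = L (∂ₓ D) + a₂ ∂ₓ D`. Hence `L D = c D` forces `L (∂ₓ D) = (c - a₂) ∂ₓ D`;
the theorem is the case `c = 2 a₂ - a₄`.
-/

open Function

section Slices

variable {𝕜 E E' : Type*} [NontriviallyNormedField 𝕜] [NormedAddCommGroup E] [NormedSpace 𝕜 E]
  [NormedAddCommGroup E'] [NormedSpace 𝕜 E']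

theorem HasFDerivAt.hasDerivAt_fst_slice {f : 𝕜 × 𝕜 → E} {f' : 𝕜 × 𝕜 →L[𝕜] E} {x y : 𝕜}
    (h : HasFDerivAt f f' (x, y)) : HasDerivAt (fun x' => f (x', y)) (f' (1, 0)) x :=
  h.comp_hasDerivAt x ((hasDerivAt_id x).prodMk (hasDerivAt_const x y))

theorem HasFDerivAt.hasDerivAt_snd_slice {f : 𝕜 × 𝕜 → E} {f' : 𝕜 × 𝕜 →L[𝕜] E} {x y : 𝕜}
    (h : HasFDerivAt f f' (x, y)) : HasDerivAt (fun y' => f (x, y')) (f' (0, 1)) y :=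
  h.comp_hasDerivAt y ((hasDerivAt_const y x).prodMk (hasDerivAt_id y))

theorem ContDiff.hasFDerivAt_fderiv_apply {F : E' → E} (hF : ContDiff 𝕜 2 F) (v p : E') :
    HasFDerivAt (fun q => fderiv 𝕜 F q v)
      ((ContinuousLinearMap.apply 𝕜 E v).comp (fderiv 𝕜 (fderiv 𝕜 F) p)) p :=
  (ContinuousLinearMap.apply 𝕜 E v).hasFDerivAt.comp p
    ((hF.fderiv_right (m := 1) le_rfl).differentiable one_ne_zero p).hasFDerivAt

variable {D : 𝕜 → 𝕜 → E}

theorem deriv_fst_eq_fderiv_uncurry (hD : Differentiable 𝕜 (uncurry D)) (x y : 𝕜) :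
    deriv (fun x' => D x' y) x = fderiv 𝕜 (uncurry D) (x, y) (1, 0) :=
  (hD (x, y)).hasFDerivAt.hasDerivAt_fst_slice.deriv

theorem deriv_snd_eq_fderiv_uncurry (hD : Differentiable 𝕜 (uncurry D)) (x y : 𝕜) :
    deriv (fun y' => D x y') y = fderiv 𝕜 (uncurry D) (x, y) (0, 1) :=
  (hD (x, y)).hasFDerivAt.hasDerivAt_snd_slice.deriv

theorem deriv_fst_deriv_fst_eq_fderiv_fderiv_uncurry (hD : ContDiff 𝕜 2 (uncurry D)) (x y : 𝕜) :
    deriv (fun x' => deriv (fun x'' => D x'' y) x') x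
      = fderiv 𝕜 (fderiv 𝕜 (uncurry D)) (x, y) (1, 0) (1, 0) := by
  simp_rw [deriv_fst_eq_fderiv_uncurry (hD.differentiable two_ne_zero)]
  exact (hD.hasFDerivAt_fderiv_apply (1, 0) (x, y)).hasDerivAt_fst_slice.deriv

end Slices

section AffineField

variable {𝕜 E : Type*} [RCLike 𝕜] [NormedAddCommGroup E] [NormedSpace 𝕜 E] {D : 𝕜 → 𝕜 → E}

theorem deriv_snd_deriv_fst_eq_fderiv_fderiv_uncurry (hD : ContDiff 𝕜 2 (uncurry D)) (x y : 𝕜) :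
    deriv (fun y' => deriv (fun x' => D x' y') x) y
      = fderiv 𝕜 (fderiv 𝕜 (uncurry D)) (x, y) (1, 0) (0, 1) := by
  simp_rw [deriv_fst_eq_fderiv_uncurry (hD.differentiable two_ne_zero)]
  rw [(hD.hasFDerivAt_fderiv_apply (1, 0) (x, y)).hasDerivAt_snd_slice.deriv]
  exact (hD.contDiffAt.isSymmSndFDerivAt (by simp)) _ _

noncomputable def affineFieldDeriv (a₁ a₂ a₃ a₄ : 𝕜) (D : 𝕜 → 𝕜 → E) (x y : 𝕜) : E :=
  (a₁ + a₂ * x) • deriv (fun x' => D x' y) x + (a₃ + a₄ * y) • deriv (fun y' => D x y') y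

theorem hasDerivAt_fst_affineFieldDeriv (a₁ a₂ a₃ a₄ : 𝕜) (hD : ContDiff 𝕜 2 (uncurry D))
    (x y : 𝕜) :
    HasDerivAt (fun x' => affineFieldDeriv a₁ a₂ a₃ a₄ D x' y)
      (affineFieldDeriv a₁ a₂ a₃ a₄ (fun x y => deriv (fun x' => D x' y) x) x y
        + a₂ • deriv (fun x' => D x' y) x) x := by
  have hD₁ := hD.differentiable two_ne_zero
  have hcoeff : HasDerivAt (fun x' : 𝕜 => a₁ + a₂ * x') a₂ x := by
    simpa using ((hasDerivAt_id x).const_mul a₂).const_add a₁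
  have hF₁₀ := (hD.hasFDerivAt_fderiv_apply (1, 0) (x, y)).hasDerivAt_fst_slice
  have hF₀₁ := (hD.hasFDerivAt_fderiv_apply (0, 1) (x, y)).hasDerivAt_fst_slice
  simp only [affineFieldDeriv]
  rw [deriv_fst_deriv_fst_eq_fderiv_fderiv_uncurry hD,
    deriv_snd_deriv_fst_eq_fderiv_fderiv_uncurry hD]
  simp_rw [deriv_snd_eq_fderiv_uncurry hD₁, deriv_fst_eq_fderiv_uncurry hD₁]
  refine ((hcoeff.smul hF₁₀).add (hF₀₁.const_smul (a₃ + a₄ * y))).congr_deriv ?_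
  simp only [ContinuousLinearMap.comp_apply, ContinuousLinearMap.apply_apply]
  abel

theorem affineFieldDeriv_deriv_fst_eq_smul {a₁ a₂ a₃ a₄ c : 𝕜} (hD : ContDiff 𝕜 2 (uncurry D))
    (hpde : ∀ x y, affineFieldDeriv a₁ a₂ a₃ a₄ D x y = c • D x y) (x y : 𝕜) :
    affineFieldDeriv a₁ a₂ a₃ a₄ (fun x y => deriv (fun x' => D x' y) x) x y
      = (c - a₂) • deriv (fun x' => D x' y) x := by
  have hD₁ := hD.differentiable two_ne_zero
  have hrhs : HasDerivAt (fun x' => c • D x' y) (c • deriv (fun x' => D x' y) x) x := by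
    rw [deriv_fst_eq_fderiv_uncurry hD₁]
    exact (hD₁ (x, y)).hasFDerivAt.hasDerivAt_fst_slice.const_smul c
  have hlhs := hasDerivAt_fst_affineFieldDeriv a₁ a₂ a₃ a₄ hD x y
  simp_rw [hpde] at hlhs
  rw [sub_smul, ← hlhs.unique hrhs, add_sub_cancel_right]

end AffineField

theorem stmt_5 (a₁ a₂ a₃ a₄ : ℝ) (D : ℝ → ℝ → ℝ)
    (hD : ContDiff ℝ 2 (fun p : ℝ × ℝ => D p.1 p.2))
    (hpde : ∀ r t : ℝ,
      (a₁ + a₂ * r) * deriv (fun r' => D r' t) r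
        + (a₃ + a₄ * t) * deriv (fun t' => D r t') t = (2 * a₂ - a₄) * D r t) :
    ∀ r t : ℝ,
      (a₁ + a₂ * r) * deriv (fun r' => deriv (fun r'' => D r'' t) r') r
        + (a₃ + a₄ * t) * deriv (fun t' => deriv (fun r' => D r' t') r) t
        = (a₂ - a₄) * deriv (fun r' => D r' t) r := by
  intro r t
  have h := affineFieldDeriv_deriv_fst_eq_smul (c := 2 * a₂ - a₄) hD hpde r t
  simp only [affineFieldDeriv, smul_eq_mul] at h
  rw [h]
  ring
end

section
/- Let φ be a C² solution of the planar monoenergetic neutron diffusion equation (1/v)·∂φ/∂t = ∂/∂r(D(r,t)·∂φ/∂r) + Γ(r,t)·φ, where D and Γ are independent of r and satisfy the Case A symmetry conditions with a₁ = a₂ = 0 and a₄ ≠ 0, i.e., (a₃ + a₄t)·∂D/∂t = -a₄·D and (a₃ + a₄t)·∂Γ/∂t = -a₄·Γ. Then for every ε, the function φ̃(r,t) = φ(r, ((a₃ + a₄t)·e^(-ε·a₄) - a₃)/a₄) is again a solution. Here r is untransformed (a₂ = 0) and the scalar flux itself is untransformed (a₆ = 0). -/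
private lemma conserved (a₃ a₄ : ℝ) (f : ℝ → ℝ) (hf : ContDiff ℝ 1 f)
    (hode : ∀ t : ℝ, 0 < a₃ + a₄ * t → (a₃ + a₄ * t) * deriv f t = -a₄ * f t)
    {s t : ℝ} (hs : 0 < a₃ + a₄ * s) (ht : 0 < a₃ + a₄ * t) :
    (a₃ + a₄ * s) * f s = (a₃ + a₄ * t) * f t := by
  set S : Set ℝ := {x | 0 < a₃ + a₄ * x} with hS
  have hopen : IsOpen S := isOpen_lt continuous_const (by continuity)
  have hconv : Convex ℝ S := by
    have : S = {x : ℝ | -a₃ < a₄ * x} := by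
      ext x; simp only [hS, Set.mem_setOf_eq]; constructor <;> intro h <;> linarith
    rw [this]
    exact convex_halfSpace_gt (IsLinearMap.mk (fun x y => mul_add a₄ x y)
      (fun c x => by simp [smul_eq_mul]; ring)) (-a₃)
  have hdf : Differentiable ℝ f := hf.differentiable one_ne_zero
  set g : ℝ → ℝ := fun x => (a₃ + a₄ * x) * f x with hg
  have hgd : ∀ x ∈ S, HasDerivAt g 0 x := by
    intro x hx
    have h1 : HasDerivAt (fun y : ℝ => a₃ + a₄ * y) a₄ x := by
      simpa using ((hasDerivAt_id x).const_mul a₄).const_add a₃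
    have h2 := h1.mul (hdf x).hasDerivAt
    have : a₄ * f x + (a₃ + a₄ * x) * deriv f x = 0 := by
      rw [hode x hx]; ring
    exact h2.congr_deriv (by simpa using this)
  exact hconv.is_const_of_fderivWithin_eq_zero
    (fun x hx => ((hgd x hx).differentiableAt.differentiableWithinAt))
    (fun x hx => by
      rw [fderivWithin_of_isOpen hopen hx, (hgd x hx).hasFDerivAt.fderiv]
      ext; simp) hs ht

theorem stmt_7 (v a₃ a₄ : ℝ) (hv : 0 < v) (ha₄ : a₄ ≠ 0)
    (D Γ : ℝ → ℝ)
    (hD : ContDiff ℝ 1 D) (hΓ : ContDiff ℝ 1 Γ)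
    (hDode : ∀ t : ℝ, 0 < a₃ + a₄ * t → (a₃ + a₄ * t) * deriv D t = -a₄ * D t)
    (hΓode : ∀ t : ℝ, 0 < a₃ + a₄ * t → (a₃ + a₄ * t) * deriv Γ t = -a₄ * Γ t)
    (φ : ℝ → ℝ → ℝ) (hφ : ContDiff ℝ 2 (fun p : ℝ × ℝ => φ p.1 p.2))
    (hsol : ∀ r t : ℝ, 0 < a₃ + a₄ * t →
      (1 / v) * deriv (fun t' => φ r t') t
        = D t * deriv (fun r' => deriv (fun r'' => φ r'' t) r') r + Γ t * φ r t)
    (ε : ℝ) :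
    ∀ r t : ℝ,
      0 < a₃ + a₄ * (((a₃ + a₄ * t) * Real.exp (-a₄ * ε) - a₃) / a₄) →
      (1 / v) * deriv (fun t' => φ r (((a₃ + a₄ * t') * Real.exp (-a₄ * ε) - a₃) / a₄)) t
        = D t * deriv (fun r' => deriv
            (fun r'' => φ r'' (((a₃ + a₄ * t) * Real.exp (-a₄ * ε) - a₃) / a₄)) r') r
          + Γ t * φ r (((a₃ + a₄ * t) * Real.exp (-a₄ * ε) - a₃) / a₄) := by
  intro r t hpos
  set E : ℝ := Real.exp (-a₄ * ε) with hE
  have hEpos : 0 < E := Real.exp_pos _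
  set Tt : ℝ := ((a₃ + a₄ * t) * E - a₃) / a₄ with hTt
  have hTval : a₃ + a₄ * Tt = (a₃ + a₄ * t) * E := by rw [hTt]; field_simp <;> ring
  have hposT : 0 < a₃ + a₄ * Tt := hpos
  have hpost : 0 < a₃ + a₄ * t := by nlinarith [hTval ▸ hposT, hEpos]
  -- chain rule
  have hdφ : Differentiable ℝ (fun p : ℝ × ℝ => φ p.1 p.2) :=
    hφ.differentiable (by norm_num)
  have h1 : ∀ y : ℝ, DifferentiableAt ℝ (fun t' => φ r t') y := fun y =>
    (hdφ (r, y)).comp y (DifferentiableAt.prodMk (differentiableAt_const r) differentiableAt_id)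
  have hTder : HasDerivAt (fun t' : ℝ => ((a₃ + a₄ * t') * E - a₃) / a₄) E t := by
    have := (((((hasDerivAt_id t).const_mul a₄).const_add a₃).mul_const E).sub_const a₃).div_const a₄
    have h : a₄ * E / a₄ = E := by field_simp
    simpa [h] using this
  have hchain : deriv (fun t' => φ r (((a₃ + a₄ * t') * E - a₃) / a₄)) t
      = deriv (fun t' => φ r t') Tt * E := by
    have := ((h1 Tt).hasDerivAt.comp t hTder)
    exact this.deriv
  -- D and Γ values at Tt
  have hcancel : (a₃ + a₄ * t) ≠ 0 := ne_of_gt hpost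
  have hDval : E * D Tt = D t := by
    have hc := conserved a₃ a₄ D hD hDode hposT hpost
    rw [hTval] at hc
    apply mul_left_cancel₀ hcancel
    linear_combination hc
  have hΓval : E * Γ Tt = Γ t := by
    have hc := conserved a₃ a₄ Γ hΓ hΓode hposT hpost
    rw [hTval] at hc
    apply mul_left_cancel₀ hcancel
    linear_combination hc
  have hsolT := hsol r Tt hposT
  rw [hchain, show (1 / v) * (deriv (fun t' => φ r t') Tt * E)
      = E * ((1 / v) * deriv (fun t' => φ r t') Tt) from by ring, hsolT,
    mul_add, ← mul_assoc, ← mul_assoc, hDval, hΓval]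
end

section
/- If Γ : ℝ × ℝ → ℝ is C¹ and satisfies a₂·r·∂Γ/∂r + (a₃ + a₄t)·∂Γ/∂t + a₄·Γ = 0 on the region {(r,t) : r > 0, a₃ + a₄t > 0}, with a₂ ≠ 0 and a₄ ≠ 0, then Γ is constant along the scaled curves in the sense that for all ε and all (r,t) in the region with (e^(a₂ε)·r, (e^(a₄ε)(a₃+a₄t) - a₃)/a₄) also in the region, Γ(e^(a₂ε)·r, (e^(a₄ε)(a₃+a₄t) - a₃)/a₄) = e^(-a₄ε)·Γ(r,t). -/
/-!
Along a characteristic `c(s) = (e^{a₂ s} r, (e^{a₄ s}(a₃ + a₄ t) - a₃)/a₄)` the velocity is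
`(a₂ r, a₃ + a₄ t)` evaluated at `c(s)`, so by the chain rule and the PDE, `g(s) = Γ(c(s))` solves
`g' = -a₄ g`; hence `g(s) = e^{-a₄ s} g(0)`, and `c(0) = (r, t)`.
-/

open Real

theorem HasFDerivAt.apply_eq_partialDerivs {G : Type*} [NormedAddCommGroup G] [NormedSpace ℝ G]
    {f : ℝ × ℝ → G} {f' : ℝ × ℝ →L[ℝ] G} {p : ℝ × ℝ} (hf : HasFDerivAt f f' p) (v w : ℝ) :
    f' (v, w) = v • deriv (fun x => f (x, p.2)) p.1 + w • deriv (fun y => f (p.1, y)) p.2 := by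
  have hfst : HasDerivAt (fun x => f (x, p.2)) (f' (1, 0)) p.1 :=
    hf.comp_hasDerivAt p.1 ((hasDerivAt_id p.1).prodMk (hasDerivAt_const p.1 p.2))
  have hsnd : HasDerivAt (fun y => f (p.1, y)) (f' (0, 1)) p.2 :=
    hf.comp_hasDerivAt p.2 ((hasDerivAt_const p.2 p.1).prodMk (hasDerivAt_id p.2))
  have hvw : ((v, w) : ℝ × ℝ) = v • ((1 : ℝ), (0 : ℝ)) + w • ((0 : ℝ), (1 : ℝ)) := by simp
  rw [hfst.deriv, hsnd.deriv, hvw, map_add, map_smul, map_smul]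

theorem eq_exp_mul_of_hasDerivAt_mul_self {g : ℝ → ℝ} {k : ℝ}
    (hg : ∀ s, HasDerivAt g (k * g s) s) (s : ℝ) : g s = exp (k * s) * g 0 := by
  have hconst : ∀ s, HasDerivAt (fun s => exp (-k * s) * g s) 0 s := by
    intro s
    have he : HasDerivAt (fun s => exp (-k * s)) (exp (-k * s) * (-k * 1)) s :=
      ((hasDerivAt_id' s).const_mul (-k)).exp
    exact (he.mul (hg s)).congr_deriv (by ring)
  have hs := is_const_of_deriv_eq_zero (fun s => (hconst s).differentiableAt)
    (fun s => (hconst s).deriv) s 0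
  simp only [mul_zero, exp_zero, one_mul] at hs
  rw [← hs, ← mul_assoc, ← exp_add]
  simp

/-- The characteristic curve of `a₂ r ∂ᵣ + (a₃ + a₄ t) ∂ₜ` through `(r, t)`. -/
noncomputable def charCurve (a₂ a₃ a₄ r t : ℝ) (s : ℝ) : ℝ × ℝ :=
  (exp (a₂ * s) * r, (exp (a₄ * s) * (a₃ + a₄ * t) - a₃) / a₄)

section charCurve

variable {a₂ a₃ a₄ : ℝ} (r t : ℝ)

theorem charCurve_affine (ha₄ : a₄ ≠ 0) (s : ℝ) :
    a₃ + a₄ * (charCurve a₂ a₃ a₄ r t s).2 = exp (a₄ * s) * (a₃ + a₄ * t) := by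
  simp only [charCurve]
  field_simp
  ring

theorem charCurve_zero (ha₄ : a₄ ≠ 0) : charCurve a₂ a₃ a₄ r t 0 = (r, t) := by
  simp only [charCurve, mul_zero, exp_zero, one_mul, add_sub_cancel_left]
  field_simp

theorem hasDerivAt_charCurve (ha₄ : a₄ ≠ 0) (s : ℝ) :
    HasDerivAt (charCurve a₂ a₃ a₄ r t)
      (a₂ * (charCurve a₂ a₃ a₄ r t s).1, a₃ + a₄ * (charCurve a₂ a₃ a₄ r t s).2) s := by
  rw [charCurve_affine r t ha₄]
  refine HasDerivAt.prodMk ?_ ?_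
  · exact ((((hasDerivAt_id' s).const_mul a₂).exp).mul_const r).congr_deriv
      (by simp only [charCurve]; ring)
  · exact ((((hasDerivAt_id' s).const_mul a₄).exp.mul_const (a₃ + a₄ * t)).sub_const
      a₃).div_const a₄ |>.congr_deriv (by field_simp)

end charCurve

theorem stmt_9_general (a₂ a₃ a₄ : ℝ) (ha₄ : a₄ ≠ 0)
    (Γ : ℝ → ℝ → ℝ)
    (hΓ : ContDiffOn ℝ 1 (fun p : ℝ × ℝ => Γ p.1 p.2)
      {p : ℝ × ℝ | 0 < p.1 ∧ 0 < a₃ + a₄ * p.2})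
    (hpde : ∀ r t : ℝ, 0 < r → 0 < a₃ + a₄ * t →
      a₂ * r * deriv (fun r' => Γ r' t) r + (a₃ + a₄ * t) * deriv (fun t' => Γ r t') t
        + a₄ * Γ r t = 0) :
    ∀ ε r t : ℝ, 0 < r → 0 < a₃ + a₄ * t →
      0 < Real.exp (a₂ * ε) * r →
      0 < a₃ + a₄ * ((Real.exp (a₄ * ε) * (a₃ + a₄ * t) - a₃) / a₄) →
      Γ (Real.exp (a₂ * ε) * r) ((Real.exp (a₄ * ε) * (a₃ + a₄ * t) - a₃) / a₄)
        = Real.exp (-a₄ * ε) * Γ r t := by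
  intro ε r t hr ht _ _
  set c := charCurve a₂ a₃ a₄ r t
  set U := {p : ℝ × ℝ | 0 < p.1 ∧ 0 < a₃ + a₄ * p.2}
  have hU : IsOpen U := (isOpen_lt continuous_const continuous_fst).inter
    (isOpen_lt continuous_const (continuous_const.add (continuous_const.mul continuous_snd)))
  have hc : ∀ s, c s ∈ U := fun s =>
    ⟨mul_pos (exp_pos _) hr, charCurve_affine r t ha₄ s ▸ mul_pos (exp_pos _) ht⟩
  have hΓdiff : ∀ s, DifferentiableAt ℝ (fun p : ℝ × ℝ => Γ p.1 p.2) (c s) := fun s =>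
    (hΓ.contDiffAt (hU.mem_nhds (hc s))).differentiableAt one_ne_zero
  have hode : ∀ s, HasDerivAt (fun s => Γ (c s).1 (c s).2) (-a₄ * Γ (c s).1 (c s).2) s := by
    intro s
    have hchain := (hΓdiff s).hasFDerivAt.comp_hasDerivAt s (hasDerivAt_charCurve r t ha₄ s)
    rw [(hΓdiff s).hasFDerivAt.apply_eq_partialDerivs] at hchain
    refine hchain.congr_deriv ?_
    simp only [smul_eq_mul]
    linarith [hpde _ _ (hc s).1 (hc s).2]
  simpa [c, charCurve, charCurve_zero r t ha₄] using eq_exp_mul_of_hasDerivAt_mul_self hode ε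

theorem stmt_9 (a₂ a₃ a₄ : ℝ) (ha₂ : a₂ ≠ 0) (ha₄ : a₄ ≠ 0)
    (Γ : ℝ → ℝ → ℝ)
    (hΓ : ContDiffOn ℝ 1 (fun p : ℝ × ℝ => Γ p.1 p.2)
      {p : ℝ × ℝ | 0 < p.1 ∧ 0 < a₃ + a₄ * p.2})
    (hpde : ∀ r t : ℝ, 0 < r → 0 < a₃ + a₄ * t →
      a₂ * r * deriv (fun r' => Γ r' t) r + (a₃ + a₄ * t) * deriv (fun t' => Γ r t') t
        + a₄ * Γ r t = 0) :
    ∀ ε r t : ℝ, 0 < r → 0 < a₃ + a₄ * t →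
      0 < Real.exp (a₂ * ε) * r →
      0 < a₃ + a₄ * ((Real.exp (a₄ * ε) * (a₃ + a₄ * t) - a₃) / a₄) →
      Γ (Real.exp (a₂ * ε) * r) ((Real.exp (a₄ * ε) * (a₃ + a₄ * t) - a₃) / a₄)
        = Real.exp (-a₄ * ε) * Γ r t :=
  stmt_9_general a₂ a₃ a₄ ha₄ Γ hΓ hpde
end
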